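/- arXiv:1007.0714 — 2 statements merged into one kernel-verified Lean document; each statement's English description precedes it below -/
import Mathlib

section
/- Every comonotonically additive function f : ℝⁿ → ℝ is completely determined by its values on the lines {x·1_A : x ∈ ℝ} for A ⊆ [n]: if f and g are comonotonically additive and f(x·1_A) = g(x·1_A) for all x ∈ ℝ and A ⊆ [n], then f = g. -/
/-- `x` and `y` are comonotonic `n`-tuples. -/
def Comonotone {n : ℕ} (x y : Fin n → ℝ) : Prop :=
  ∃ σ : Equiv.Perm (Fin n), Monotone (x ∘ σ) ∧ Monotone (y ∘ σ)

/-- `f` is comonotonically additive on `ℝⁿ`. -/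
def ComonAdd {n : ℕ} (f : (Fin n → ℝ) → ℝ) : Prop :=
  ∀ x y : Fin n → ℝ, Comonotone x y → f (x + y) = f x + f y

lemma comonAdd_key {n : ℕ} (f g : (Fin n → ℝ) → ℝ)
    (hf : ComonAdd f) (hg : ComonAdd g)
    (h : ∀ (A : Finset (Fin n)) (x : ℝ),
      f (fun i => if i ∈ A then x else 0) = g (fun i => if i ∈ A then x else 0))
    (x : Fin n → ℝ) (hx : Monotone x) : f x = g x := by
  cases n with
  | zero =>
      have hx0 : x = (fun i => if i ∈ (∅ : Finset (Fin 0)) then (0:ℝ) else 0) := by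
        funext i; exact i.elim0
      rw [hx0]; exact h ∅ 0
  | succ n =>
      have key : ∀ m : Fin (n+1),
          f (fun i => x (min i m)) = g (fun i => x (min i m)) := by
        intro m
        induction m using Fin.induction with
        | zero =>
            have : (fun i : Fin (n+1) => x (min i 0))
                = (fun i => if i ∈ (Finset.univ : Finset (Fin (n+1))) then x 0 else 0) := by
              funext i
              simp [min_eq_right (Fin.zero_le i)]
            rw [this]; exact h Finset.univ (x 0)
        | succ m ih =>
            set d : ℝ := x m.succ - x m.castSucc with hd
            have hd0 : 0 ≤ d := sub_nonneg.2 (hx m.castSucc_le_succ)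
            have hsplit : (fun i : Fin (n+1) => x (min i m.succ))
                = (fun i => x (min i m.castSucc))
                  + (fun i => if m.succ ≤ i then d else 0) := by
              funext i
              by_cases hi : m.succ ≤ i
              · have h1 : min i m.succ = m.succ := min_eq_right hi
                have h2 : min i m.castSucc = m.castSucc :=
                  min_eq_right (le_trans m.castSucc_le_succ hi)
                simp [h1, h2, hi, hd]
              · have hi' : i ≤ m.castSucc := by
                  rcases lt_or_ge i m.succ with hlt | hge
                  · exact Fin.le_castSucc_iff.mpr hlt
                  · exact absurd hge hi
                have h1 : min i m.succ = i := min_eq_left (le_trans hi' m.castSucc_le_succ)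
                have h2 : min i m.castSucc = i := min_eq_left hi'
                simp [h1, h2, hi]
            have hmono1 : Monotone (fun i : Fin (n+1) => x (min i m.castSucc)) :=
              hx.comp (fun a b hab => min_le_min hab le_rfl)
            have hmono2 : Monotone (fun i : Fin (n+1) => if m.succ ≤ i then d else 0) := by
              intro a b hab
              dsimp only
              by_cases ha : m.succ ≤ a
              · simp [ha, le_trans ha hab]
              · by_cases hb : m.succ ≤ b <;> simp [ha, hb, hd0]
            have hcom : Comonotone (fun i : Fin (n+1) => x (min i m.castSucc))
                (fun i => if m.succ ≤ i then d else 0) :=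
              ⟨Equiv.refl _, by simpa using hmono1, by simpa using hmono2⟩
            have hind : f (fun i : Fin (n+1) => if m.succ ≤ i then d else 0)
                = g (fun i => if m.succ ≤ i then d else 0) := by
              have := h (Finset.Ici m.succ) d
              simpa [Finset.mem_Ici] using this
            rw [hsplit, hf _ _ hcom, hg _ _ hcom, ih, hind]
      have hx' : x = fun i => x (min i (Fin.last n)) := by
        funext i; rw [min_eq_left (Fin.le_last i)]
      rw [hx']
      exact key (Fin.last n)

/-- a comonotonically additive function on `ℝⁿ` is determined by
its values on the lines `{x·1_A : x ∈ ℝ}`, `A ⊆ [n]`. -/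
theorem comonAdd_determined_by_lines {n : ℕ} (f g : (Fin n → ℝ) → ℝ)
    (hf : ComonAdd f) (hg : ComonAdd g)
    (h : ∀ (A : Finset (Fin n)) (x : ℝ),
      f (fun i => if i ∈ A then x else 0) = g (fun i => if i ∈ A then x else 0)) :
    f = g := by
  funext x
  obtain σ := Tuple.sort x
  set σ := Tuple.sort x with hσ
  have hmono : Monotone (x ∘ σ) := Tuple.monotone_sort x
  set f' : (Fin n → ℝ) → ℝ := fun y => f (y ∘ σ.symm) with hf'
  set g' : (Fin n → ℝ) → ℝ := fun y => g (y ∘ σ.symm) with hg'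
  have hcomp : ∀ (F : (Fin n → ℝ) → ℝ), ComonAdd F →
      ComonAdd (fun y => F (y ∘ σ.symm)) := by
    intro F hF y z ⟨τ, hy, hz⟩
    have : (y + z) ∘ ⇑σ.symm = y ∘ ⇑σ.symm + z ∘ ⇑σ.symm := rfl
    dsimp only
    rw [this]
    refine hF _ _ ⟨τ.trans σ, ?_, ?_⟩
    · have : (y ∘ ⇑σ.symm) ∘ ⇑(τ.trans σ) = y ∘ ⇑τ := by
        funext i; simp
      rw [this]; exact hy
    · have : (z ∘ ⇑σ.symm) ∘ ⇑(τ.trans σ) = z ∘ ⇑τ := by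
        funext i; simp
      rw [this]; exact hz
  have h' : ∀ (A : Finset (Fin n)) (c : ℝ),
      f' (fun i => if i ∈ A then c else 0) = g' (fun i => if i ∈ A then c else 0) := by
    intro A c
    have e : ((fun i => if i ∈ A then c else 0) ∘ ⇑σ.symm)
        = fun i => if i ∈ A.image σ then c else 0 := by
      funext i
      simp only [Function.comp_apply, Finset.mem_image]
      congr 1
      simp only [eq_iff_iff]
      constructor
      · intro hm; exact ⟨σ.symm i, hm, by simp⟩
      · rintro ⟨j, hj, rfl⟩; simpa using hj
    rw [hf', hg']
    dsimp only
    rw [e]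
    exact h (A.image σ) c
  have := comonAdd_key f' g' (hcomp f hf) (hcomp g hg) h' (x ∘ σ) hmono
  have e2 : (x ∘ ⇑σ) ∘ ⇑σ.symm = x := by funext i; simp
  rw [hf', hg'] at this
  dsimp only at this
  rwa [e2] at this
end

section
/- Assume I is a real interval centered at 0. A function f : Iⁿ → ℝ restricted to nonnegative tuples is positively horizontally min-additive if and only if it is positively comonotonically additive (f(x+x') = f(x)+f(x') for comonotonic x, x' ∈ (I∩[0,∞))ⁿ with x+x' ∈ (I∩[0,∞))ⁿ). -/
/-- `f` is positively horizontally min-additive. -/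
def PosHorizMinAdd {n : ℕ} (I : Set ℝ) (f : (Fin n → ℝ) → ℝ) : Prop :=
  ∀ x : Fin n → ℝ, (∀ i, x i ∈ I ∩ Set.Ici 0) → ∀ c ∈ I ∩ Set.Ici 0,
    f x = f (fun i => min (x i) c) + f (fun i => x i - min (x i) c)

/-- `f` is positively comonotonically additive. -/
def PosComonAdd {n : ℕ} (I : Set ℝ) (f : (Fin n → ℝ) → ℝ) : Prop :=
  ∀ x y : Fin n → ℝ, (∀ i, x i ∈ I ∩ Set.Ici 0) → (∀ i, y i ∈ I ∩ Set.Ici 0) →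
    (∀ i, x i + y i ∈ I ∩ Set.Ici 0) → Comonotone x y →
      f (x + y) = f x + f y

lemma aux_sub_min_mono {c s t : ℝ} (h : s ≤ t) : s - min s c ≤ t - min t c := by
  rcases le_total s c with h1 | h1 <;> rcases le_total t c with h2 | h2
  · rw [min_eq_left h1, min_eq_left h2]; linarith
  · rw [min_eq_left h1, min_eq_right h2]; linarith
  · rw [min_eq_right h1, min_eq_left h2]; linarith
  · rw [min_eq_right h1, min_eq_right h2]; linarith

lemma aux_twoLevel {n : ℕ} {I : Set ℝ} {f : (Fin n → ℝ) → ℝ}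
    (hmin : PosHorizMinAdd I f)
    (hIm : ∀ r w : ℝ, w ∈ I → 0 ≤ r → r ≤ w → r ∈ I ∩ Set.Ici 0)
    (p : Fin n → Prop) [DecidablePred p]
    (a b s t : ℝ) (ha : 0 ≤ a) (hb : 0 ≤ b) (hs : 0 ≤ s) (ht : 0 ≤ t)
    (hM : ((a + s) + (b + t)) ∈ I) :
    f (fun i => (a + b) + if p i then s + t else 0) =
      f (fun i => a + if p i then s else 0) + f (fun i => b + if p i then t else 0) := by
  have mem1 : ∀ i, ((a + b) + if p i then s + t else 0) ∈ I ∩ Set.Ici 0 := by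
    intro i; by_cases h : p i <;> simp only [if_pos, if_neg, h, if_true, if_false] <;>
      exact hIm _ _ hM (by linarith) (by linarith)
  have mem2 : ∀ i, ((if p i then s + t else 0) : ℝ) ∈ I ∩ Set.Ici 0 := by
    intro i; by_cases h : p i <;> simp only [if_pos, if_neg, h, if_true, if_false] <;>
      exact hIm _ _ hM (by linarith) (by linarith)
  have mem3 : ∀ _i : Fin n, (a + b) ∈ I ∩ Set.Ici 0 := by
    intro _; exact hIm _ _ hM (by linarith) (by linarith)
  have mem4 : ∀ i, (a + if p i then s else 0) ∈ I ∩ Set.Ici 0 := by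
    intro i; by_cases h : p i <;> simp only [if_pos, if_neg, h, if_true, if_false] <;>
      exact hIm _ _ hM (by linarith) (by linarith)
  have mem5 : ∀ i, (b + if p i then t else 0) ∈ I ∩ Set.Ici 0 := by
    intro i; by_cases h : p i <;> simp only [if_pos, if_neg, h, if_true, if_false] <;>
      exact hIm _ _ hM (by linarith) (by linarith)
  have h1 := hmin _ mem1 (a + b) (hIm _ _ hM (by linarith) (by linarith))
  have h2 := hmin _ mem2 s (hIm _ _ hM (by linarith) (by linarith))
  have h3 := hmin _ mem3 a (hIm _ _ hM (by linarith) (by linarith))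
  have h4 := hmin _ mem4 a (hIm _ _ hM (by linarith) (by linarith))
  have h5 := hmin _ mem5 b (hIm _ _ hM (by linarith) (by linarith))
  have e1 : (fun i => min ((a + b) + if p i then s + t else 0) (a + b)) =
      (fun _ : Fin n => a + b) := by
    funext i; by_cases h : p i
    · rw [if_pos h]; exact min_eq_right (by linarith)
    · rw [if_neg h, add_zero, min_self]
  have e2 : (fun i => ((a + b) + if p i then s + t else 0) - min ((a + b) + if p i then s + t else 0) (a + b)) =
      (fun i => if p i then s + t else 0) := by
    funext i; by_cases h : p i
    · rw [if_pos h, min_eq_right (by linarith : a + b ≤ (a+b) + (s+t))]; ring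
    · rw [if_neg h, add_zero, min_self]; ring
  have e3 : (fun i => min (if p i then s + t else 0) s) = (fun i => if p i then s else 0) := by
    funext i; by_cases h : p i
    · rw [if_pos h, if_pos h]; exact min_eq_right (by linarith)
    · rw [if_neg h, if_neg h]; exact min_eq_left hs
  have e4 : (fun i => (if p i then s + t else 0) - min (if p i then s + t else 0) s) =
      (fun i => if p i then t else 0) := by
    funext i; by_cases h : p i
    · rw [if_pos h, if_pos h, min_eq_right (by linarith : s ≤ s + t)]; ring
    · rw [if_neg h, if_neg h, min_eq_left hs]; ring
  have e5 : (fun _ : Fin n => min (a + b) a) = (fun _ : Fin n => a) := by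
    funext _; exact min_eq_right (by linarith)
  have e6 : (fun _ : Fin n => (a + b) - min (a + b) a) = (fun _ : Fin n => b) := by
    funext _; rw [min_eq_right (by linarith : a ≤ a + b)]; ring
  have e7 : (fun i => min (a + if p i then s else 0) a) = (fun _ : Fin n => a) := by
    funext i; by_cases h : p i
    · rw [if_pos h]; exact min_eq_right (by linarith)
    · rw [if_neg h, add_zero, min_self]
  have e8 : (fun i => (a + if p i then s else 0) - min (a + if p i then s else 0) a) =
      (fun i => if p i then s else 0) := by
    funext i; by_cases h : p i
    · rw [if_pos h, min_eq_right (by linarith : a ≤ a + s)]; ring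
    · rw [if_neg h, add_zero, min_self]; ring
  have e9 : (fun i => min (b + if p i then t else 0) b) = (fun _ : Fin n => b) := by
    funext i; by_cases h : p i
    · rw [if_pos h]; exact min_eq_right (by linarith)
    · rw [if_neg h, add_zero, min_self]
  have e10 : (fun i => (b + if p i then t else 0) - min (b + if p i then t else 0) b) =
      (fun i => if p i then t else 0) := by
    funext i; by_cases h : p i
    · rw [if_pos h, min_eq_right (by linarith : b ≤ b + t)]; ring
    · rw [if_neg h, add_zero, min_self]; ring
  rw [e1, e2] at h1
  rw [e3, e4] at h2
  rw [e5, e6] at h3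
  rw [e7, e8] at h4
  rw [e9, e10] at h5
  linarith

lemma aux_key {n : ℕ} {I : Set ℝ} {f : (Fin n → ℝ) → ℝ}
    (hmin : PosHorizMinAdd I f)
    (hIm : ∀ r w : ℝ, w ∈ I → 0 ≤ r → r ≤ w → r ∈ I ∩ Set.Ici 0)
    (hne : Nonempty (Fin n)) :
    ∀ (d : ℕ) (x y : Fin n → ℝ) (σ : Equiv.Perm (Fin n)),
      Monotone (x ∘ σ) → Monotone (y ∘ σ) →
      (∀ i, x i ∈ I ∩ Set.Ici 0) → (∀ i, y i ∈ I ∩ Set.Ici 0) →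
      (∀ i, x i + y i ∈ I ∩ Set.Ici 0) →
      (Finset.image (fun i => x i + y i) Finset.univ).card ≤ d →
      f (x + y) = f x + f y := by
  intro d
  induction d with
  | zero =>
    intro x y σ _ _ _ _ _ hcard
    exfalso
    have : (Finset.image (fun i => x i + y i) Finset.univ).Nonempty :=
      ⟨x (Classical.arbitrary (Fin n)) + y (Classical.arbitrary (Fin n)),
        Finset.mem_image.mpr ⟨Classical.arbitrary (Fin n), Finset.mem_univ _, rfl⟩⟩
    have := Finset.card_pos.mpr this
    omega
  | succ d IH =>
    intro x y σ hxm hym hx hy hxy hcard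
    classical
    have npos : 0 < n := Fin.pos (Classical.arbitrary (Fin n))
    set z : Fin n := ⟨0, npos⟩ with hzdef
    have hz : ∀ j : Fin n, z ≤ j := by
      intro j; rw [hzdef]; simp [Fin.le_def]
    set a := x (σ z) with hadef
    set b := y (σ z) with hbdef
    have ha0 : 0 ≤ a := (hx (σ z)).2
    have hb0 : 0 ≤ b := (hy (σ z)).2
    have hax : ∀ i, a ≤ x i := by
      intro i
      have := hxm (hz (σ.symm i))
      rw [hadef]
      simpa [Function.comp] using this
    have hby : ∀ i, b ≤ y i := by
      intro i
      have := hym (hz (σ.symm i))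
      rw [hbdef]
      simpa [Function.comp] using this
    by_cases hconst : ∀ i, x i + y i = a + b
    · -- constant case
      have hxa : ∀ i, x i = a := fun i => by
        have h1 := hax i; have h2 := hby i; have h3 := hconst i; linarith
      have hyb : ∀ i, y i = b := fun i => by
        have h1 := hax i; have h2 := hby i; have h3 := hconst i; linarith
      have hmem_a : a ∈ I ∩ Set.Ici 0 := by rw [hadef]; exact hx (σ z)
      have h1 := hmin (x + y) hxy a hmem_a
      have e1 : (fun i => min ((x + y) i) a) = x := by
        funext i
        simp only [Pi.add_apply]
        rw [hxa i, hyb i]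
        exact min_eq_right (by linarith)
      have e2 : (fun i => (x + y) i - min ((x + y) i) a) = y := by
        funext i
        simp only [Pi.add_apply]
        rw [hxa i, hyb i, min_eq_right (by linarith : a ≤ a + b)]
        ring
      rw [e1, e2] at h1
      exact h1
    · push_neg at hconst
      set T : Finset (Fin n) := Finset.univ.filter (fun j => a + b < x (σ j) + y (σ j)) with hTdef
      have hTne : T.Nonempty := by
        obtain ⟨i, hi⟩ := hconst
        refine ⟨σ.symm i, ?_⟩
        rw [hTdef]
        simp only [Finset.mem_filter, Finset.mem_univ, true_and, Equiv.apply_symm_apply]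
        exact lt_of_le_of_ne (by have h1 := hax i; have h2 := hby i; linarith) (Ne.symm hi)
      set k := T.min' hTne with hkdef
      have hkT : k ∈ T := T.min'_mem hTne
      set a' := x (σ k) with ha'def
      set b' := y (σ k) with hb'def
      have hmlt : a + b < a' + b' := by
        rw [ha'def, hb'def]
        have h := hkT
        rw [hTdef] at h
        simpa using (Finset.mem_filter.mp h).2
      have H2 : ∀ i, a + b < x i + y i → a' ≤ x i ∧ b' ≤ y i := by
        intro i hi
        have hmem : σ.symm i ∈ T := by
          rw [hTdef]
          simp only [Finset.mem_filter, Finset.mem_univ, true_and, Equiv.apply_symm_apply]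
          exact hi
        have hk_le : k ≤ σ.symm i := by rw [hkdef]; exact T.min'_le _ hmem
        constructor
        · rw [ha'def]; have := hxm hk_le; simpa [Function.comp] using this
        · rw [hb'def]; have := hym hk_le; simpa [Function.comp] using this
      have H1 : ∀ i, ¬(a + b < x i + y i) → x i = a ∧ y i = b := by
        intro i hi
        push_neg at hi
        have h1 := hax i; have h2 := hby i
        constructor <;> linarith
      have ha' : a ≤ a' := by rw [ha'def]; exact hax (σ k)
      have hb' : b ≤ b' := by rw [hb'def]; exact hby (σ k)
      have hc'mem : a' + b' ∈ I ∩ Set.Ici 0 := by rw [ha'def, hb'def]; exact hxy (σ k)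
      have ha'mem : a' ∈ I ∩ Set.Ici 0 := by rw [ha'def]; exact hx (σ k)
      have hb'mem : b' ∈ I ∩ Set.Ici 0 := by rw [hb'def]; exact hy (σ k)
      have E1 := hmin (x + y) hxy (a' + b') hc'mem
      have q1 : (fun i => min ((x + y) i) (a' + b')) =
          (fun i => (a + b) + if a + b < x i + y i then (a' - a) + (b' - b) else 0) := by
        funext i
        simp only [Pi.add_apply]
        by_cases h : a + b < x i + y i
        · rw [if_pos h, min_eq_right (by have := H2 i h; linarith)]
          ring
        · obtain ⟨e1, e2⟩ := H1 i h
          rw [if_neg h, e1, e2, min_eq_left (le_of_lt hmlt), add_zero]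
      have q2 : (fun i => (x + y) i - min ((x + y) i) (a' + b')) =
          ((fun i => x i - min (x i) a') + (fun i => y i - min (y i) b')) := by
        funext i
        simp only [Pi.add_apply]
        by_cases h : a + b < x i + y i
        · obtain ⟨e1, e2⟩ := H2 i h
          rw [min_eq_right (by linarith), min_eq_right e1, min_eq_right e2]
          ring
        · obtain ⟨e1, e2⟩ := H1 i h
          rw [e1, e2, min_eq_left (le_of_lt hmlt), min_eq_left ha', min_eq_left hb']
          ring
      rw [q1, q2] at E1
      have E3 := hmin x hx a' ha'mem
      have q3 : (fun i => min (x i) a') =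
          (fun i => a + if a + b < x i + y i then a' - a else 0) := by
        funext i
        by_cases h : a + b < x i + y i
        · rw [if_pos h, min_eq_right (H2 i h).1]; ring
        · rw [if_neg h, (H1 i h).1, min_eq_left ha', add_zero]
      rw [q3] at E3
      have E4 := hmin y hy b' hb'mem
      have q4 : (fun i => min (y i) b') =
          (fun i => b + if a + b < x i + y i then b' - b else 0) := by
        funext i
        by_cases h : a + b < x i + y i
        · rw [if_pos h, min_eq_right (H2 i h).2]; ring
        · rw [if_neg h, (H1 i h).2, min_eq_left hb', add_zero]
      rw [q4] at E4
      have E2 : f (fun i => (a + b) + if a + b < x i + y i then (a' - a) + (b' - b) else 0) =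
          f (fun i => a + if a + b < x i + y i then a' - a else 0) +
          f (fun i => b + if a + b < x i + y i then b' - b else 0) :=
        aux_twoLevel hmin hIm (fun i => a + b < x i + y i) a b (a' - a) (b' - b)
          ha0 hb0 (by linarith) (by linarith)
          (by rw [show (a + (a' - a)) + (b + (b' - b)) = a' + b' by ring]; exact hc'mem.1)
      have hx'm : Monotone ((fun i => x i - min (x i) a') ∘ σ) :=
        fun j1 j2 h => aux_sub_min_mono (hxm h)
      have hy'm : Monotone ((fun i => y i - min (y i) b') ∘ σ) :=
        fun j1 j2 h => aux_sub_min_mono (hym h)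
      have hx'mem : ∀ i, (x i - min (x i) a') ∈ I ∩ Set.Ici 0 := by
        intro i
        have h1 : 0 ≤ min (x i) a' := le_min (hx i).2 ha'mem.2
        have h2 := min_le_left (x i) a'
        exact hIm _ _ (hx i).1 (by linarith) (by linarith)
      have hy'mem : ∀ i, (y i - min (y i) b') ∈ I ∩ Set.Ici 0 := by
        intro i
        have h1 : 0 ≤ min (y i) b' := le_min (hy i).2 hb'mem.2
        have h2 := min_le_left (y i) b'
        exact hIm _ _ (hy i).1 (by linarith) (by linarith)
      have hsum'mem : ∀ i, ((fun i => x i - min (x i) a') i + (fun i => y i - min (y i) b') i) ∈ I ∩ Set.Ici 0 := by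
        intro i
        simp only []
        have h1 : 0 ≤ min (x i) a' := le_min (hx i).2 ha'mem.2
        have h2 : 0 ≤ min (y i) b' := le_min (hy i).2 hb'mem.2
        have h3 := min_le_left (x i) a'
        have h4 := min_le_left (y i) b'
        exact hIm _ _ (hxy i).1 (by linarith) (by linarith)
      have hcard' : (Finset.image
          (fun i => (fun i => x i - min (x i) a') i + (fun i => y i - min (y i) b') i)
          Finset.univ).card ≤ d := by
        have himeq : (fun i => (fun i => x i - min (x i) a') i + (fun i => y i - min (y i) b') i) =
            (fun t => t - min t (a' + b')) ∘ (fun i => x i + y i) := by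
          funext i
          simp only [Function.comp]
          by_cases h : a + b < x i + y i
          · obtain ⟨e1, e2⟩ := H2 i h
            rw [min_eq_right e1, min_eq_right e2, min_eq_right (by linarith)]
            ring
          · obtain ⟨e1, e2⟩ := H1 i h
            rw [e1, e2, min_eq_left ha', min_eq_left hb', min_eq_left (le_of_lt hmlt)]
            ring
        rw [himeq, ← Finset.image_image]
        have hmS : (a + b) ∈ Finset.image (fun i => x i + y i) Finset.univ :=
          Finset.mem_image.mpr ⟨σ z, Finset.mem_univ _, by rw [hadef, hbdef]⟩
        have hc'S : (a' + b') ∈ Finset.image (fun i => x i + y i) Finset.univ :=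
          Finset.mem_image.mpr ⟨σ k, Finset.mem_univ _, by rw [ha'def, hb'def]⟩
        have hsub : Finset.image (fun t => t - min t (a' + b'))
              (Finset.image (fun i => x i + y i) Finset.univ) ⊆
            Finset.image (fun t => t - min t (a' + b'))
              ((Finset.image (fun i => x i + y i) Finset.univ).erase (a + b)) := by
          intro t ht
          obtain ⟨u, hu, rfl⟩ := Finset.mem_image.mp ht
          by_cases hu' : u = a + b
          · refine Finset.mem_image.mpr ⟨a' + b', Finset.mem_erase.mpr ⟨ne_of_gt hmlt, hc'S⟩, ?_⟩
            rw [hu', min_self, min_eq_left (le_of_lt hmlt)]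
            ring
          · exact Finset.mem_image.mpr ⟨u, Finset.mem_erase.mpr ⟨hu', hu⟩, rfl⟩
        calc (Finset.image (fun t => t - min t (a' + b'))
              (Finset.image (fun i => x i + y i) Finset.univ)).card
            ≤ (Finset.image (fun t => t - min t (a' + b'))
              ((Finset.image (fun i => x i + y i) Finset.univ).erase (a + b))).card :=
              Finset.card_le_card hsub
          _ ≤ ((Finset.image (fun i => x i + y i) Finset.univ).erase (a + b)).card :=
              Finset.card_image_le
          _ = (Finset.image (fun i => x i + y i) Finset.univ).card - 1 :=
              Finset.card_erase_of_mem hmS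
          _ ≤ d := by
              have := Finset.card_pos.mpr ⟨_, hmS⟩
              omega
      have E5 := IH (fun i => x i - min (x i) a') (fun i => y i - min (y i) b') σ
        hx'm hy'm hx'mem hy'mem hsum'mem hcard'
      linarith

/-- on an interval `I` centered at `0`, positive horizontal
min-additivity is equivalent to positive comonotonic additivity. -/
theorem posHorizMinAdd_iff_posComonAdd {n : ℕ} (I : Set ℝ)
    (hI : I.OrdConnected) (h0 : (0 : ℝ) ∈ I) (hnt : ∃ x ∈ I, x ≠ 0)
    (hsym : ∀ x ∈ I, -x ∈ I) (f : (Fin n → ℝ) → ℝ) :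
    PosHorizMinAdd I f ↔ PosComonAdd I f := by
  have hIm : ∀ r w : ℝ, w ∈ I → 0 ≤ r → r ≤ w → r ∈ I ∩ Set.Ici 0 :=
    fun r w hw h1 h2 => ⟨hI.out h0 hw ⟨h1, h2⟩, h1⟩
  constructor
  · intro hmin x y hx hy hxy hcom
    rcases isEmpty_or_nonempty (Fin n) with he | hne
    · have hall : ∀ u v : Fin n → ℝ, u = v := fun u v => funext fun i => (he.false i).elim
      have h0' := hmin x hx 0 ⟨h0, Set.self_mem_Ici⟩
      rw [hall (fun i => min (x i) 0) x, hall (fun i => x i - min (x i) 0) x] at h0'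
      rw [hall (x + y) x, hall y x]
      exact h0'
    · obtain ⟨σ, hxm, hym⟩ := hcom
      exact aux_key hmin hIm hne _ x y σ hxm hym hx hy hxy le_rfl
  · intro hcom x hx c hc
    have mem1 : ∀ i, min (x i) c ∈ I ∩ Set.Ici 0 := fun i =>
      hIm _ _ (hx i).1 (le_min (hx i).2 hc.2) (min_le_left _ _)
    have mem2 : ∀ i, (x i - min (x i) c) ∈ I ∩ Set.Ici 0 := by
      intro i
      have h1 := min_le_left (x i) c
      have h2 : 0 ≤ min (x i) c := le_min (hx i).2 hc.2
      exact hIm _ _ (hx i).1 (by linarith) (by linarith)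
    have mem3 : ∀ i, min (x i) c + (x i - min (x i) c) ∈ I ∩ Set.Ici 0 := by
      intro i
      rw [show min (x i) c + (x i - min (x i) c) = x i by ring]
      exact hx i
    have mono1 : Monotone ((fun i => min (x i) c) ∘ Tuple.sort x) :=
      fun j1 j2 h => min_le_min (Tuple.monotone_sort x h) le_rfl
    have mono2 : Monotone ((fun i => x i - min (x i) c) ∘ Tuple.sort x) :=
      fun j1 j2 h => aux_sub_min_mono (Tuple.monotone_sort x h)
    have h := hcom (fun i => min (x i) c) (fun i => x i - min (x i) c) mem1 mem2 mem3
      ⟨Tuple.sort x, mono1, mono2⟩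
    rw [show ((fun i => min (x i) c) + (fun i => x i - min (x i) c)) = x from
      funext fun i => by show min (x i) c + (x i - min (x i) c) = x i; ring] at h
    exact h
end
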